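/- Let θ ∈ {0,1/2} and let ε ∈ ℂ with 1+εk ≠ 0 for every integer k. Suppose G: ℤ×(ℤ+θ) → ℂ, H: (ℤ+θ)×ℤ → ℂ, D: (ℤ+θ)×(ℤ+θ) → ℂ satisfy, for all m,n ∈ ℤ and r,s,t ∈ ℤ+θ: G(m,r)(1+2εr) − H(r,m)(1+εm) = (m/2−r)(1+2ε(m+r)); D(r,s)(1+2εs) + D(s,r)(1+2εr) = 2+2ε(r+s); (m−n)G(m+n,r) = G(n,r)G(m,n+r) − G(m,r)G(n,m+r); (m/2−r)H(m+r,n) = H(r,n)G(m,n+r) + n·H(r,m+n); (m/2−r)D(m+r,s) = −(r+s)D(r,s) − G(m,s)D(r,m+s); −2m = H(s,m)D(r,m+s) + H(r,m)D(s,m+r); 2G(r+s,t) = D(s,t)H(r,s+t) + D(r,t)H(s,r+t). Then for all r,s ∈ ℤ+θ and all k ∈ ℤ: D(2ks+r, s) = D(r,s) and D(−s, −2ks−r) = D(−s,−r); in particular D((2k+1)r, r) = 1 and D(r, (2k+1)r) = 1 for all r ∈ ℤ+θ and k ∈ ℤ. -/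

import Mathlib

/-- membership in ℤ + θ -/
def InZT (θ x : ℂ) : Prop := ∃ k : ℤ, x = (k : ℂ) + θ

/-!
Specializing the equations at coinciding or opposite arguments gives `D(s,s) = D(-s,s) = 1`
and `H(s,m) D(s,m+s) = -m`. Equations (3.9) and (3.12) then express `G(s+r,-r)` through `D` in two
ways; comparing them gives the step `D(2s+r,s) = D(r,s)` for `r ≠ ±s`, the exceptional cases
being `D(-s,s) = 1` and `D(3s,s) = 1`, and induction gives periodicity in the first argument.
Through (3.7) this transports to the second argument when `ε = 0`. When `ε ≠ 0`, the defect
`κ(t,u) = (1+2εu)(D(t,u)-1)` is even in `u`, and (3.9) gives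
`2ε(t-u) κ(t,u) = κ(u-2t,u) (1+2εt+κ(t,u))`; comparing `u` with `-u` forces `4εu κ(t,u) = 0`,
so `D ≡ 1`.
-/

namespace InZT

variable {θ r s t : ℂ}

theorem int_add (n : ℤ) (hs : InZT θ s) : InZT θ (n + s) := by
  obtain ⟨k, rfl⟩ := hs
  exact ⟨n + k, by push_cast; ring⟩

theorem exists_int_eq_sub (hs : InZT θ s) (ht : InZT θ t) : ∃ n : ℤ, (n : ℂ) = s - t := by
  obtain ⟨a, rfl⟩ := hs
  obtain ⟨b, rfl⟩ := ht
  exact ⟨a - b, by push_cast; ring⟩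

theorem exists_int_eq_two_mul (hθ : θ = 0 ∨ θ = 1 / 2) (hs : InZT θ s) :
    ∃ n : ℤ, (n : ℂ) = 2 * s := by
  obtain ⟨k, rfl⟩ := hs
  rcases hθ with rfl | rfl
  · exact ⟨2 * k, by push_cast; ring⟩
  · exact ⟨2 * k + 1, by push_cast; ring⟩

theorem exists_int_eq_add (hθ : θ = 0 ∨ θ = 1 / 2) (hs : InZT θ s) (ht : InZT θ t) :
    ∃ n : ℤ, (n : ℂ) = s + t := by
  obtain ⟨a, ha⟩ := hs.exists_int_eq_sub ht
  obtain ⟨b, hb⟩ := ht.exists_int_eq_two_mul hθ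
  exact ⟨a + b, by push_cast; rw [ha, hb]; ring⟩

theorem two_mul_int_mul_add (hθ : θ = 0 ∨ θ = 1 / 2) (hs : InZT θ s) (hr : InZT θ r) (k : ℤ) :
    InZT θ (2 * k * s + r) := by
  obtain ⟨n, hn⟩ := hs.exists_int_eq_two_mul hθ
  convert hr.int_add (k * n) using 1
  push_cast
  rw [hn]
  ring

theorem neg (hθ : θ = 0 ∨ θ = 1 / 2) (hs : InZT θ s) : InZT θ (-s) := by
  convert hs.two_mul_int_mul_add hθ hs (-1) using 1
  push_cast
  ring

end InZT

/-! The equations (3.6), (3.7), (3.9), (3.10), (3.11), (3.12) of the paper. -/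

def Eqn36 (θ ε : ℂ) (G H : ℂ → ℂ → ℂ) : Prop :=
  ∀ (m : ℤ) (r : ℂ), InZT θ r →
    G m r * (1 + 2 * ε * r) - H r m * (1 + ε * (m : ℂ))
      = ((m : ℂ) / 2 - r) * (1 + 2 * ε * ((m : ℂ) + r))

def Eqn37 (θ ε : ℂ) (D : ℂ → ℂ → ℂ) : Prop :=
  ∀ r s : ℂ, InZT θ r → InZT θ s →
    D r s * (1 + 2 * ε * s) + D s r * (1 + 2 * ε * r) = 2 + 2 * ε * (r + s)

def Eqn39 (θ : ℂ) (G H : ℂ → ℂ → ℂ) : Prop :=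
  ∀ (m n : ℤ) (r : ℂ), InZT θ r →
    ((m : ℂ) / 2 - r) * H ((m : ℂ) + r) n
      = H r n * G m ((n : ℂ) + r) + (n : ℂ) * H r ((m : ℂ) + (n : ℂ))

def Eqn310 (θ : ℂ) (G D : ℂ → ℂ → ℂ) : Prop :=
  ∀ (m : ℤ) (r s : ℂ), InZT θ r → InZT θ s →
    ((m : ℂ) / 2 - r) * D ((m : ℂ) + r) s = -(r + s) * D r s - G m s * D r ((m : ℂ) + s)

def Eqn311 (θ : ℂ) (H D : ℂ → ℂ → ℂ) : Prop :=
  ∀ (m : ℤ) (r s : ℂ), InZT θ r → InZT θ s →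
    -2 * (m : ℂ) = H s m * D r ((m : ℂ) + s) + H r m * D s ((m : ℂ) + r)

def Eqn312 (θ : ℂ) (G H D : ℂ → ℂ → ℂ) : Prop :=
  ∀ r s t : ℂ, InZT θ r → InZT θ s → InZT θ t →
    2 * G (r + s) t = D s t * H r (s + t) + D r t * H s (r + t)

section Equations

variable {θ ε : ℂ} {G H D : ℂ → ℂ → ℂ} {r s t u : ℂ}

theorem one_add_two_mul_ne_zero (hθ : θ = 0 ∨ θ = 1 / 2) (hε : ∀ k : ℤ, 1 + ε * (k : ℂ) ≠ 0)
    (hs : InZT θ s) : 1 + 2 * ε * s ≠ 0 := by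
  obtain ⟨n, hn⟩ := hs.exists_int_eq_two_mul hθ
  convert hε n using 2
  rw [hn]
  ring

theorem D_self (hθ : θ = 0 ∨ θ = 1 / 2) (hε : ∀ k : ℤ, 1 + ε * (k : ℂ) ≠ 0)
    (e2 : Eqn37 θ ε D) (hs : InZT θ s) : D s s = 1 := by
  refine mul_right_cancel₀ (one_add_two_mul_ne_zero hθ hε hs) ?_
  linear_combination e2 s s hs hs / 2

theorem D_eq_one_of_swap (hθ : θ = 0 ∨ θ = 1 / 2) (hε : ∀ k : ℤ, 1 + ε * (k : ℂ) ≠ 0)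
    (e2 : Eqn37 θ ε D) (hr : InZT θ r) (hs : InZT θ s) (h : D s r = 1) : D r s = 1 := by
  refine mul_right_cancel₀ (one_add_two_mul_ne_zero hθ hε hs) ?_
  linear_combination e2 r s hr hs - (1 + 2 * ε * r) * h

theorem H_mul_D_eq_neg (e6 : Eqn311 θ H D) {m : ℤ} {x y : ℂ} (hs : InZT θ s)
    (hx : (m : ℂ) = x) (hy : x + s = y) : H s x * D s y = -x := by
  subst hx hy
  linear_combination -e6 m s s hs hs / 2

theorem H_zero_right (hθ : θ = 0 ∨ θ = 1 / 2) (hε : ∀ k : ℤ, 1 + ε * (k : ℂ) ≠ 0)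
    (e2 : Eqn37 θ ε D) (e6 : Eqn311 θ H D) (hs : InZT θ s) : H s 0 = 0 := by
  have h := H_mul_D_eq_neg e6 (m := 0) hs Int.cast_zero (zero_add s)
  rwa [D_self hθ hε e2 hs, mul_one, neg_zero] at h

theorem G_zero_left (hθ : θ = 0 ∨ θ = 1 / 2) (hε : ∀ k : ℤ, 1 + ε * (k : ℂ) ≠ 0)
    (e2 : Eqn37 θ ε D) (e5 : Eqn310 θ G D) (hs : InZT θ s) : G 0 s = -s := by
  have h := e5 0 s s hs hs
  simp only [Int.cast_zero, zero_add, zero_div, D_self hθ hε e2 hs] at h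
  linear_combination h

theorem D_ne_zero (hθ : θ = 0 ∨ θ = 1 / 2) (hε : ∀ k : ℤ, 1 + ε * (k : ℂ) ≠ 0)
    (e2 : Eqn37 θ ε D) (e6 : Eqn311 θ H D) (hs : InZT θ s) (ht : InZT θ t) : D s t ≠ 0 := by
  obtain ⟨n, hn⟩ := ht.exists_int_eq_sub hs
  intro h0
  have h := H_mul_D_eq_neg e6 hs hn (sub_add_cancel t s)
  rw [h0, mul_zero, zero_eq_neg, sub_eq_zero] at h
  rw [h, D_self hθ hε e2 hs] at h0
  exact one_ne_zero h0

theorem G_mul_D (hθ : θ = 0 ∨ θ = 1 / 2) (hε : ∀ k : ℤ, 1 + ε * (k : ℂ) ≠ 0)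
    (e2 : Eqn37 θ ε D) (e6 : Eqn311 θ H D) (e7 : Eqn312 θ G H D) (m : ℤ) (ht : InZT θ t) :
    2 * G m t * D (-t) (m + t) = -(m + 2 * t) * D (m + t) t := by
  have hmt : InZT θ (m + t) := ht.int_add m
  have h := e7 (-t) (m + t) t (ht.neg hθ) hmt ht
  rw [show -t + (m + t) = m by ring, show (m : ℂ) + t + t = m + 2 * t by ring, neg_add_cancel,
    H_zero_right hθ hε e2 e6 hmt, mul_zero, add_zero] at h
  obtain ⟨n, hn⟩ := ht.exists_int_eq_two_mul hθ
  have hHD := H_mul_D_eq_neg e6 (m := m + n) (ht.neg hθ) (by push_cast; rw [hn])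
    (show (m : ℂ) + 2 * t + -t = m + t by ring)
  linear_combination D (-t) (m + t) * h + D (m + t) t * hHD

theorem D_self_neg (hθ : θ = 0 ∨ θ = 1 / 2) (hε : ∀ k : ℤ, 1 + ε * (k : ℂ) ≠ 0)
    (e1 : Eqn36 θ ε G H) (e2 : Eqn37 θ ε D) (e6 : Eqn311 θ H D) (e7 : Eqn312 θ G H D)
    (ht : InZT θ t) : D t (-t) = 1 := by
  rcases eq_or_ne t 0 with rfl | ht0
  · rw [neg_zero, D_self hθ hε e2 ht]
  obtain ⟨n, hn⟩ := ht.exists_int_eq_two_mul hθ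
  have hmn : ((-n : ℤ) : ℂ) = -(2 * t) := by push_cast; rw [hn]
  have hG : G (-(2 * t)) t = 0 := by
    have h := G_mul_D hθ hε e2 e6 e7 (-n) ht
    rw [hmn, show -(2 * t) + t = -t by ring, D_self hθ hε e2 (ht.neg hθ)] at h
    linear_combination h / 2
  have hH : H t (-(2 * t)) = 2 * t := by
    have h := e1 (-n) t ht
    rw [hmn, hG] at h
    refine mul_right_cancel₀ (hε (-n)) ?_
    rw [hmn]
    linear_combination -h
  have h := H_mul_D_eq_neg e6 ht hmn (show -(2 * t) + t = -t by ring)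
  rw [hH] at h
  refine mul_left_cancel₀ (mul_ne_zero two_ne_zero ht0) ?_
  linear_combination h

theorem D_neg_self (hθ : θ = 0 ∨ θ = 1 / 2) (hε : ∀ k : ℤ, 1 + ε * (k : ℂ) ≠ 0)
    (e1 : Eqn36 θ ε G H) (e2 : Eqn37 θ ε D) (e6 : Eqn311 θ H D) (e7 : Eqn312 θ G H D)
    (ht : InZT θ t) : D (-t) t = 1 :=
  D_eq_one_of_swap hθ hε e2 (ht.neg hθ) ht (D_self_neg hθ hε e1 e2 e6 e7 ht)

theorem G_mul_D_two_mul_add (hθ : θ = 0 ∨ θ = 1 / 2) (hε : ∀ k : ℤ, 1 + ε * (k : ℂ) ≠ 0)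
    (e2 : Eqn37 θ ε D) (e4 : Eqn39 θ G H) (e6 : Eqn311 θ H D) {m : ℤ} (hm : (m : ℂ) ≠ 0)
    (ht : InZT θ t) :
    G m t * D (2 * m + t) (m + t) = -(m / 2 + t) * D (m + t) t := by
  have hmt : InZT θ (m + t) := ht.int_add m
  have h := e4 m (-m) (m + t) hmt
  push_cast at h
  rw [show (m : ℂ) + (m + t) = 2 * m + t by ring, neg_add_cancel_left, add_neg_cancel,
    H_zero_right hθ hε e2 e6 hmt, mul_zero, add_zero] at h
  have h2mt : InZT θ (2 * m + t) := by exact_mod_cast ht.int_add (2 * m)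
  have h1 := H_mul_D_eq_neg e6 (m := -m) h2mt (by push_cast; rfl)
    (show -(m : ℂ) + (2 * m + t) = m + t by ring)
  have h2 := H_mul_D_eq_neg e6 (m := -m) hmt (by push_cast; rfl) (neg_add_cancel_left _ _)
  refine mul_left_cancel₀ hm ?_
  linear_combination -(D (2 * m + t) (m + t) * D (m + t) t) * h
    - (m / 2 + t) * D (m + t) t * h1 - G m t * D (2 * m + t) (m + t) * h2

theorem D_two_mul_add_of_ne (hθ : θ = 0 ∨ θ = 1 / 2) (hε : ∀ k : ℤ, 1 + ε * (k : ℂ) ≠ 0)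
    (e2 : Eqn37 θ ε D) (e4 : Eqn39 θ G H) (e6 : Eqn311 θ H D) (e7 : Eqn312 θ G H D)
    (hr : InZT θ r) (hs : InZT θ s) (hrs : r ≠ s) (hrs' : r ≠ -s) :
    D (2 * s + r) s = D r s := by
  obtain ⟨m, hm⟩ := hs.exists_int_eq_add hθ hr
  have hm0 : (m : ℂ) ≠ 0 := by
    rw [hm]
    exact fun h ↦ hrs' (by linear_combination h)
  have h1 := G_mul_D_two_mul_add hθ hε e2 e4 e6 hm0 (hr.neg hθ)
  have h2 := G_mul_D hθ hε e2 e6 e7 m (hr.neg hθ)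
  rw [hm, show 2 * (s + r) + -r = 2 * s + r by ring, add_neg_cancel_right] at h1
  rw [hm, add_neg_cancel_right, neg_neg, show s + r + 2 * -r = s - r by ring] at h2
  have hG : G (s + r) (-r) ≠ 0 := by
    intro hG
    rw [hG, mul_zero, zero_mul, zero_eq_mul, neg_eq_zero, sub_eq_zero] at h2
    exact h2.elim (fun h ↦ hrs h.symm) (D_ne_zero hθ hε e2 e6 hs (hr.neg hθ))
  refine mul_left_cancel₀ (mul_ne_zero two_ne_zero hG) ?_
  linear_combination 2 * h1 - h2

theorem D_mul_D_neg_left (hθ : θ = 0 ∨ θ = 1 / 2) (hε : ∀ k : ℤ, 1 + ε * (k : ℂ) ≠ 0)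
    (e2 : Eqn37 θ ε D) (e5 : Eqn310 θ G D) (e6 : Eqn311 θ H D) (e7 : Eqn312 θ G H D)
    (hs : InZT θ s) (ht : InZT θ t) :
    -2 * t * (D s t * D (-s) t) = -(s + t) * D s t ^ 2 - (t - s) * D (-s) t ^ 2 := by
  have h := e7 (-s) s t (hs.neg hθ) hs ht
  rw [neg_add_cancel, G_zero_left hθ hε e2 e5 ht] at h
  obtain ⟨m₁, hm₁⟩ := hs.exists_int_eq_add hθ ht
  obtain ⟨m₂, hm₂⟩ := ht.exists_int_eq_sub hs
  have h1 := H_mul_D_eq_neg e6 (hs.neg hθ) hm₁ (add_neg_cancel_comm s t)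
  have h2 := H_mul_D_eq_neg e6 hs (show (m₂ : ℂ) = -s + t by rw [hm₂]; ring)
    (show -s + t + s = t by ring)
  linear_combination D s t * D (-s) t * h + D s t ^ 2 * h1 + D (-s) t ^ 2 * h2

theorem D_neg_left_of_ne (hθ : θ = 0 ∨ θ = 1 / 2) (hε : ∀ k : ℤ, 1 + ε * (k : ℂ) ≠ 0)
    (e2 : Eqn37 θ ε D) (e4 : Eqn39 θ G H) (e5 : Eqn310 θ G D) (e6 : Eqn311 θ H D)
    (e7 : Eqn312 θ G H D) (hs : InZT θ s) (ht : InZT θ t) (ht0 : t ≠ 0) (h1 : s ≠ t)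
    (h2 : s ≠ -t) (h3 : s ≠ -(3 * t)) : D (-s) t = D s t := by
  have hs' : InZT θ (2 * t + s) := by simpa using ht.two_mul_int_mul_add hθ hs 1
  have ha := D_mul_D_neg_left hθ hε e2 e5 e6 e7 hs ht
  have hb := D_mul_D_neg_left hθ hε e2 e5 e6 e7 hs' ht
  have c1 := D_two_mul_add_of_ne hθ hε e2 e4 e6 e7 hs ht h1 h2
  have c2 := D_two_mul_add_of_ne hθ hε e2 e4 e6 e7 (hs'.neg hθ) ht
    (fun h ↦ h3 (by linear_combination -h)) (fun h ↦ h2 (by linear_combination -h))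
  rw [show 2 * t + -(2 * t + s) = -s by ring] at c2
  rw [c1, ← c2] at hb
  have hsq : 2 * t * ((D s t - D (-s) t) * (D s t + D (-s) t)) = 0 := by
    linear_combination hb - ha
  rcases mul_eq_zero.1 hsq with h | h
  · exact absurd h (mul_ne_zero two_ne_zero ht0)
  rcases mul_eq_zero.1 h with h | h
  · exact (sub_eq_zero.1 h).symm
  · have h4 : 4 * t * D (-s) t ^ 2 = 0 := by
      linear_combination ha - ((s + t) * D s t - (s + 3 * t) * D (-s) t) * h
    exact absurd h4 (mul_ne_zero (mul_ne_zero (by norm_num) ht0)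
      (pow_ne_zero 2 (D_ne_zero hθ hε e2 e6 (hs.neg hθ) ht)))

theorem D_neg_left (hθ : θ = 0 ∨ θ = 1 / 2) (hε : ∀ k : ℤ, 1 + ε * (k : ℂ) ≠ 0)
    (e1 : Eqn36 θ ε G H) (e2 : Eqn37 θ ε D) (e4 : Eqn39 θ G H) (e5 : Eqn310 θ G D)
    (e6 : Eqn311 θ H D) (e7 : Eqn312 θ G H D) (hs : InZT θ s) (ht : InZT θ t) (ht0 : t ≠ 0) :
    D (-s) t = D s t := by
  by_cases h1 : s = t
  · rw [h1, D_neg_self hθ hε e1 e2 e6 e7 ht, D_self hθ hε e2 ht]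
  by_cases h2 : s = -t
  · rw [h2, neg_neg, D_self hθ hε e2 ht, D_neg_self hθ hε e1 e2 e6 e7 ht]
  by_cases h3 : s = -(3 * t)
  · have h3t : InZT θ (3 * t) := by
      convert ht.two_mul_int_mul_add hθ ht 1 using 1
      push_cast
      ring
    rw [h3, neg_neg]
    exact (D_neg_left_of_ne hθ hε e2 e4 e5 e6 e7 h3t ht ht0
      (fun h ↦ ht0 (by linear_combination h / 2)) (fun h ↦ ht0 (by linear_combination h / 4))
      (fun h ↦ ht0 (by linear_combination h / 6))).symm
  exact D_neg_left_of_ne hθ hε e2 e4 e5 e6 e7 hs ht ht0 h1 h2 h3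

theorem D_three_mul_self (hθ : θ = 0 ∨ θ = 1 / 2) (hε : ∀ k : ℤ, 1 + ε * (k : ℂ) ≠ 0)
    (e1 : Eqn36 θ ε G H) (e2 : Eqn37 θ ε D) (e4 : Eqn39 θ G H) (e5 : Eqn310 θ G D)
    (e6 : Eqn311 θ H D) (e7 : Eqn312 θ G H D) (hs : InZT θ s) : D (3 * s) s = 1 := by
  rcases eq_or_ne s 0 with rfl | hs0
  · rw [mul_zero, D_self hθ hε e2 hs]
  obtain ⟨n, hn⟩ := hs.exists_int_eq_two_mul hθ
  have h3s : InZT θ (3 * s) := by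
    convert hs.int_add n using 1
    rw [hn]
    ring
  have hGH : G (2 * s) s = H s (2 * s) := by
    have h := e1 n s hs
    rw [hn] at h
    refine mul_right_cancel₀ (one_add_two_mul_ne_zero hθ hε hs) ?_
    linear_combination h
  have hHD := H_mul_D_eq_neg e6 hs hn (show 2 * s + s = 3 * s by ring)
  have hq := G_mul_D hθ hε e2 e6 e7 n hs
  rw [hn, show 2 * s + s = 3 * s by ring, show 2 * s + 2 * s = 4 * s by ring,
    D_neg_left hθ hε e1 e2 e4 e5 e6 e7 hs h3s (mul_ne_zero three_ne_zero hs0)] at hq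
  refine mul_left_cancel₀ (mul_ne_zero (by norm_num : (4 : ℂ) ≠ 0) hs0) ?_
  linear_combination hq - 2 * hHD - 2 * D s (3 * s) * hGH

theorem D_two_mul_add (hθ : θ = 0 ∨ θ = 1 / 2) (hε : ∀ k : ℤ, 1 + ε * (k : ℂ) ≠ 0)
    (e1 : Eqn36 θ ε G H) (e2 : Eqn37 θ ε D) (e4 : Eqn39 θ G H) (e5 : Eqn310 θ G D)
    (e6 : Eqn311 θ H D) (e7 : Eqn312 θ G H D) (hr : InZT θ r) (hs : InZT θ s) :
    D (2 * s + r) s = D r s := by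
  by_cases h1 : r = s
  · rw [h1, show 2 * s + s = 3 * s by ring, D_three_mul_self hθ hε e1 e2 e4 e5 e6 e7 hs,
      D_self hθ hε e2 hs]
  by_cases h2 : r = -s
  · rw [h2, show 2 * s + -s = s by ring, D_self hθ hε e2 hs, D_neg_self hθ hε e1 e2 e6 e7 hs]
  exact D_two_mul_add_of_ne hθ hε e2 e4 e6 e7 hr hs h1 h2

theorem D_two_mul_int_mul_add (hθ : θ = 0 ∨ θ = 1 / 2) (hε : ∀ k : ℤ, 1 + ε * (k : ℂ) ≠ 0)
    (e1 : Eqn36 θ ε G H) (e2 : Eqn37 θ ε D) (e4 : Eqn39 θ G H) (e5 : Eqn310 θ G D)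
    (e6 : Eqn311 θ H D) (e7 : Eqn312 θ G H D) (hr : InZT θ r) (hs : InZT θ s) (k : ℤ) :
    D (2 * k * s + r) s = D r s := by
  induction k using Int.induction_on with
  | zero => simp
  | succ k ih =>
    rw [← ih, ← D_two_mul_add hθ hε e1 e2 e4 e5 e6 e7 (hs.two_mul_int_mul_add hθ hr k) hs]
    congr 1
    push_cast
    ring
  | pred k ih =>
    rw [← ih, ← D_two_mul_add hθ hε e1 e2 e4 e5 e6 e7 (hs.two_mul_int_mul_add hθ hr (-k - 1)) hs]
    congr 1
    push_cast
    ring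

theorem D_odd_mul_self (hθ : θ = 0 ∨ θ = 1 / 2) (hε : ∀ k : ℤ, 1 + ε * (k : ℂ) ≠ 0)
    (e1 : Eqn36 θ ε G H) (e2 : Eqn37 θ ε D) (e4 : Eqn39 θ G H) (e5 : Eqn310 θ G D)
    (e6 : Eqn311 θ H D) (e7 : Eqn312 θ G H D) (hr : InZT θ r) (k : ℤ) :
    D ((2 * k + 1) * r) r = 1 := by
  rw [show (2 * k + 1) * r = 2 * k * r + r by ring,
    D_two_mul_int_mul_add hθ hε e1 e2 e4 e5 e6 e7 hr hr k, D_self hθ hε e2 hr]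

theorem D_self_odd_mul (hθ : θ = 0 ∨ θ = 1 / 2) (hε : ∀ k : ℤ, 1 + ε * (k : ℂ) ≠ 0)
    (e1 : Eqn36 θ ε G H) (e2 : Eqn37 θ ε D) (e4 : Eqn39 θ G H) (e5 : Eqn310 θ G D)
    (e6 : Eqn311 θ H D) (e7 : Eqn312 θ G H D) (hr : InZT θ r) (k : ℤ) :
    D r ((2 * k + 1) * r) = 1 := by
  refine D_eq_one_of_swap hθ hε e2 hr ?_ (D_odd_mul_self hθ hε e1 e2 e4 e5 e6 e7 hr k)
  convert hr.two_mul_int_mul_add hθ hr k using 1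
  ring

theorem D_neg_right_sub_one (hθ : θ = 0 ∨ θ = 1 / 2) (hε : ∀ k : ℤ, 1 + ε * (k : ℂ) ≠ 0)
    (e1 : Eqn36 θ ε G H) (e2 : Eqn37 θ ε D) (e4 : Eqn39 θ G H) (e5 : Eqn310 θ G D)
    (e6 : Eqn311 θ H D) (e7 : Eqn312 θ G H D) (ht : InZT θ t) (hu : InZT θ u) (ht0 : t ≠ 0) :
    (1 - 2 * ε * u) * (D t (-u) - 1) = (1 + 2 * ε * u) * (D t u - 1) := by
  have h1 := e2 t (-u) ht (hu.neg hθ)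
  rw [D_neg_left hθ hε e1 e2 e4 e5 e6 e7 hu ht ht0] at h1
  linear_combination h1 - e2 t u ht hu

theorem one_add_two_mul_mul_D_eq (hθ : θ = 0 ∨ θ = 1 / 2) (hε : ∀ k : ℤ, 1 + ε * (k : ℂ) ≠ 0)
    (e1 : Eqn36 θ ε G H) (e2 : Eqn37 θ ε D) (e4 : Eqn39 θ G H) (e5 : Eqn310 θ G D)
    (e6 : Eqn311 θ H D) (e7 : Eqn312 θ G H D) (ht : InZT θ t) (hu : InZT θ u) (ht0 : t ≠ 0)
    (hu0 : u ≠ 0) (hut : u + t ≠ 0) :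
    (1 + 2 * ε * t) * D t u
      = (2 * ε * (t - u) + (1 + 2 * ε * u) * D t u) * D (u - 2 * t) u := by
  obtain ⟨m, hm⟩ := hu.exists_int_eq_sub ht
  obtain ⟨n, hn⟩ := ht.exists_int_eq_two_mul hθ
  obtain ⟨k, hk⟩ := hu.exists_int_eq_add hθ ht
  have hmt := ht.neg hθ
  have hu2t : InZT θ (u - 2 * t) := by
    convert hu.int_add (-n) using 1
    push_cast
    rw [hn]
    ring
  have he := e4 m n (-t) hmt
  rw [hm, hn, show u - t + -t = u - 2 * t by ring, show 2 * t + -t = t by ring,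
    show u - t + 2 * t = u + t by ring] at he
  have hH : H (-t) (2 * t) = -(2 * t) := by
    have h := H_mul_D_eq_neg e6 hmt hn (show 2 * t + -t = t by ring)
    rwa [D_neg_self hθ hε e1 e2 e6 e7 ht, mul_one] at h
  have hB := H_mul_D_eq_neg e6 hu2t hn (show 2 * t + (u - 2 * t) = u by ring)
  have hC := H_mul_D_eq_neg e6 hmt hk (show u + t + -t = u by ring)
  have hq := G_mul_D hθ hε e2 e6 e7 m ht
  rw [hm, show u - t + t = u by ring, show u - t + 2 * t = u + t by ring] at hq
  rw [D_neg_left hθ hε e1 e2 e4 e5 e6 e7 ht hu hu0] at hq hC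
  have hW : D t u = (2 - D u t) * D (u - 2 * t) u := by
    refine mul_left_cancel₀ (mul_ne_zero ht0 hut) ?_
    linear_combination -(D t u * D (u - 2 * t) u) * he + (u + t) / 2 * D t u * hB
      + t * D (u - 2 * t) u * hq - 2 * t * D (u - 2 * t) u * hC - D t u * D (u - 2 * t) u * G (u - t) t * hH
  linear_combination (1 + 2 * ε * t) * hW - D (u - 2 * t) u * e2 u t hu ht

theorem D_eq_one_of_ne (hε0 : ε ≠ 0) (hθ : θ = 0 ∨ θ = 1 / 2)
    (hε : ∀ k : ℤ, 1 + ε * (k : ℂ) ≠ 0) (e1 : Eqn36 θ ε G H) (e2 : Eqn37 θ ε D)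
    (e4 : Eqn39 θ G H) (e5 : Eqn310 θ G D) (e6 : Eqn311 θ H D) (e7 : Eqn312 θ G H D)
    (ht : InZT θ t) (hu : InZT θ u) (ht0 : t ≠ 0) (hu0 : u ≠ 0) (htu : t ≠ u) (htu' : t ≠ -u)
    (h2t : u + 2 * t ≠ 0) : D t u = 1 := by
  have hx : InZT θ (-u - 2 * t) := by
    convert ht.two_mul_int_mul_add hθ (hu.neg hθ) (-1) using 1
    push_cast
    ring
  have hF := one_add_two_mul_mul_D_eq hθ hε e1 e2 e4 e5 e6 e7 ht hu ht0 hu0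
    (fun h ↦ htu' (by linear_combination h))
  have hF' := one_add_two_mul_mul_D_eq hθ hε e1 e2 e4 e5 e6 e7 ht (hu.neg hθ) ht0
    (neg_ne_zero.2 hu0) (fun h ↦ htu (by linear_combination h))
  have hδ := D_neg_right_sub_one hθ hε e1 e2 e4 e5 e6 e7 ht hu ht0
  have hδ' := D_neg_right_sub_one hθ hε e1 e2 e4 e5 e6 e7 hx hu
    (fun h ↦ h2t (by linear_combination -h))
  have hper := D_two_mul_int_mul_add hθ hε e1 e2 e4 e5 e6 e7 hx hu 1
  rw [show 2 * ((1 : ℤ) : ℂ) * u + (-u - 2 * t) = u - 2 * t by push_cast; ring] at hper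
  rw [← hper] at hδ'
  -- with `κ = (1 + 2εu)(D t u - 1)`, `hF` reads `2ε(t-u)κ = κ(u-2t,u)(1+2εt+κ)`, and `hF'`
  -- is the same relation with `u` replaced by `-u`, while `κ(t,·)` and `κ(u-2t,·)` are even
  have hκ : 4 * ε * u * ((1 + 2 * ε * u) * (D t u - 1)) = 0 := by
    linear_combination (1 - 2 * ε * u) * hF' - (1 + 2 * ε * u) * hF
      - 2 * ε * (t + u) * hδ + (1 + 2 * ε * t + (1 - 2 * ε * u) * (D t (-u) - 1)) * hδ'
      + (1 + 2 * ε * u) * (D (u - 2 * t) u - 1) * hδ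
  have hne : 4 * ε * u * (1 + 2 * ε * u) ≠ 0 :=
    mul_ne_zero (mul_ne_zero (mul_ne_zero (by norm_num) hε0) hu0)
      (one_add_two_mul_ne_zero hθ hε hu)
  rw [← mul_assoc, mul_eq_zero, sub_eq_zero] at hκ
  exact hκ.resolve_left hne

theorem D_eq_one (hε0 : ε ≠ 0) (hθ : θ = 0 ∨ θ = 1 / 2) (hε : ∀ k : ℤ, 1 + ε * (k : ℂ) ≠ 0)
    (e1 : Eqn36 θ ε G H) (e2 : Eqn37 θ ε D) (e4 : Eqn39 θ G H) (e5 : Eqn310 θ G D)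
    (e6 : Eqn311 θ H D) (e7 : Eqn312 θ G H D) (ht : InZT θ t) (hu : InZT θ u) : D t u = 1 := by
  have of_ne_zero : ∀ {t u : ℂ}, InZT θ t → InZT θ u → u ≠ 0 → D t u = 1 := by
    intro t u ht hu hu0
    by_cases h1 : t = u
    · rw [h1, D_self hθ hε e2 hu]
    by_cases h2 : t = -u
    · rw [h2, D_neg_self hθ hε e1 e2 e6 e7 hu]
    by_cases h3 : t = 0 ∨ u + 2 * t = 0
    · rw [← D_two_mul_add hθ hε e1 e2 e4 e5 e6 e7 ht hu]
      have h2ut : InZT θ (2 * u + t) := by simpa using hu.two_mul_int_mul_add hθ ht 1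
      exact D_eq_one_of_ne hε0 hθ hε e1 e2 e4 e5 e6 e7 h2ut hu (by grind) hu0 (by grind) (by grind) (by grind)
    rw [not_or] at h3
    exact D_eq_one_of_ne hε0 hθ hε e1 e2 e4 e5 e6 e7 ht hu h3.1 hu0 h1 h2 h3.2
  rcases eq_or_ne u 0 with rfl | hu0
  · rcases eq_or_ne t 0 with rfl | ht0
    · exact D_self hθ hε e2 ht
    · exact D_eq_one_of_swap hθ hε e2 ht hu (of_ne_zero hu ht ht0)
  · exact of_ne_zero ht hu hu0

theorem D_two_mul_int_mul_add_right (hθ : θ = 0 ∨ θ = 1 / 2)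
    (hε : ∀ k : ℤ, 1 + ε * (k : ℂ) ≠ 0) (e1 : Eqn36 θ ε G H) (e2 : Eqn37 θ ε D)
    (e4 : Eqn39 θ G H) (e5 : Eqn310 θ G D) (e6 : Eqn311 θ H D) (e7 : Eqn312 θ G H D)
    (hr : InZT θ r) (hs : InZT θ s) (k : ℤ) : D s (2 * k * s + r) = D s r := by
  have hr' := hs.two_mul_int_mul_add hθ hr k
  rcases eq_or_ne ε 0 with rfl | hε0
  · have h := e2 s _ hs hr'
    rw [D_two_mul_int_mul_add hθ hε e1 e2 e4 e5 e6 e7 hr hs k] at h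
    linear_combination h - e2 s r hs hr
  · rw [D_eq_one hε0 hθ hε e1 e2 e4 e5 e6 e7 hs hr', D_eq_one hε0 hθ hε e1 e2 e4 e5 e6 e7 hs hr]

end Equations

theorem D_periodicity (θ ε : ℂ) (hθ : θ = 0 ∨ θ = 1 / 2)
    (hε : ∀ k : ℤ, 1 + ε * (k : ℂ) ≠ 0)
    (G H D : ℂ → ℂ → ℂ)
    (e1 : ∀ (m : ℤ) (r : ℂ), InZT θ r →
      G m r * (1 + 2 * ε * r) - H r m * (1 + ε * (m : ℂ))
        = ((m : ℂ) / 2 - r) * (1 + 2 * ε * ((m : ℂ) + r)))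
    (e2 : ∀ r s : ℂ, InZT θ r → InZT θ s →
      D r s * (1 + 2 * ε * s) + D s r * (1 + 2 * ε * r) = 2 + 2 * ε * (r + s))
    (e4 : ∀ (m n : ℤ) (r : ℂ), InZT θ r →
      ((m : ℂ) / 2 - r) * H ((m : ℂ) + r) n
        = H r n * G m ((n : ℂ) + r) + (n : ℂ) * H r ((m : ℂ) + (n : ℂ)))
    (e5 : ∀ (m : ℤ) (r s : ℂ), InZT θ r → InZT θ s →
      ((m : ℂ) / 2 - r) * D ((m : ℂ) + r) s
        = -(r + s) * D r s - G m s * D r ((m : ℂ) + s))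
    (e6 : ∀ (m : ℤ) (r s : ℂ), InZT θ r → InZT θ s →
      -2 * (m : ℂ) = H s m * D r ((m : ℂ) + s) + H r m * D s ((m : ℂ) + r))
    (e7 : ∀ r s t : ℂ, InZT θ r → InZT θ s → InZT θ t →
      2 * G (r + s) t = D s t * H r (s + t) + D r t * H s (r + t)) :
    (∀ r s : ℂ, InZT θ r → InZT θ s → ∀ k : ℤ,
      D (2 * (k : ℂ) * s + r) s = D r s ∧
      D (-s) (-2 * (k : ℂ) * s - r) = D (-s) (-r)) ∧
    ∀ r : ℂ, InZT θ r → ∀ k : ℤ,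
      D ((2 * (k : ℂ) + 1) * r) r = 1 ∧ D r ((2 * (k : ℂ) + 1) * r) = 1 := by
  refine ⟨fun r s hr hs k ↦ ⟨D_two_mul_int_mul_add hθ hε e1 e2 e4 e5 e6 e7 hr hs k, ?_⟩,
    fun r hr k ↦ ⟨D_odd_mul_self hθ hε e1 e2 e4 e5 e6 e7 hr k,
      D_self_odd_mul hθ hε e1 e2 e4 e5 e6 e7 hr k⟩⟩
  have h := D_two_mul_int_mul_add_right hθ hε e1 e2 e4 e5 e6 e7 (hr.neg hθ) (hs.neg hθ) k
  rwa [show 2 * (k : ℂ) * -s + -r = -2 * k * s - r by ring] at h
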